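/- The free meta-variables of the first-order linear logic translation ||H||^{f(alpha)} of a hybrid type-logical grammar formula H with principal type alpha are exactly the type variables occurring in alpha. -/

import Mathlib

/-- first-order terms: meta-variables (free variables), quantifier-bound
variables, and string-position constants -/
inductive FTm : Type
  | fvar : ℕ → FTm
  | bvar : ℕ → FTm
  | fconst : ℕ → FTm
  deriving DecidableEq

namespace FTm
/-- free (meta-)variables -/
def fv : FTm → Finset ℕ
  | fvar n => {n}
  | _ => ∅
/-- replace the bound variable `x` by the term `t` -/
def openT (x : ℕ) (t : FTm) : FTm → FTm
  | bvar y => if y = x then t else bvar y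
  | u => u
/-- apply a substitution of terms for meta-variables -/
def applyS (s : ℕ → FTm) : FTm → FTm
  | fvar n => s n
  | u => u
end FTm

/-- formulas of first-order multiplicative intuitionistic linear logic
(the ⊸, ∀ fragment); `all n A` binds `bvar n` in `A` -/
inductive Fm : Type
  | atom : ℕ → List FTm → Fm
  | impl : Fm → Fm → Fm
  | all : ℕ → Fm → Fm

namespace Fm
/-- free meta-variables of a formula -/
def fv : Fm → Finset ℕ
  | atom _ args => args.foldr (fun t s => t.fv ∪ s) ∅
  | impl A B => A.fv ∪ B.fv
  | all _ A => A.fv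
/-- instantiate the bound variable `x` by the term `t` -/
def openF (x : ℕ) (t : FTm) : Fm → Fm
  | atom p args => atom p (args.map (FTm.openT x t))
  | impl A B => impl (A.openF x t) (B.openF x t)
  | all y A => if y = x then all y A else all y (A.openF x t)
/-- apply a substitution of terms for meta-variables -/
def applyS (s : ℕ → FTm) : Fm → Fm
  | atom p args => atom p (args.map (FTm.applyS s))
  | impl A B => impl (A.applyS s) (B.applyS s)
  | all y A => all y (A.applyS s)
end Fm

/-- simple (string) types whose atoms are first-order terms -/
inductive STy : Type
  | leaf : FTm → STy
  | arr : STy → STy → STy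
  deriving DecidableEq

namespace STy
/-- flatten a type to the reversed list of its leaves:
`f(β → α) = f(α) ++ f(β)` -/
def flat : STy → List FTm
  | leaf t => [t]
  | arr b a => a.flat ++ b.flat
/-- the meta-variables occurring in a type -/
def vars : STy → Finset ℕ
  | leaf t => t.fv
  | arr a b => a.vars ∪ b.vars
/-- apply a substitution of terms for meta-variables -/
def applyS (s : ℕ → FTm) : STy → STy
  | leaf t => leaf (t.applyS s)
  | arr a b => arr (a.applyS s) (b.applyS s)
end STy

/-- formulas of hybrid type-logical grammar:
`over A B` is `A/B`, `under B A` is `B\A`, `bar A B` is `A|B` -/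
inductive HForm : Type
  | atom : ℕ → HForm
  | over : HForm → HForm → HForm
  | under : HForm → HForm → HForm
  | bar : HForm → HForm → HForm
  deriving DecidableEq

namespace HForm
def size : HForm → ℕ
  | atom _ => 0
  | .over A B => A.size + B.size + 1
  | under B A => B.size + A.size + 1
  | bar A B => A.size + B.size + 1
end HForm

/-- Lambek formulas: built from atoms by `/` and `\` only -/
def Lambek : HForm → Prop
  | .atom _ => True
  | .over A B => Lambek A ∧ Lambek B
  | .under B A => Lambek B ∧ Lambek A
  | .bar _ _ => False

/-- the string type corresponding to the pair of string positions `[a,b]` -/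
def pr (a b : FTm) : STy := .arr (.leaf b) (.leaf a)

/-- translation of a hybrid formula with (the flattening of) its principal
type into a first-order linear logic formula:
  ‖p‖^{[C₁,…,Cₙ]} = p(C₁,…,Cₙ)
  ‖A|B‖^{f(β→α)} = ‖B‖^{f(β)} ⊸ ‖A‖^{f(α)}
  ‖A/B‖^{[C,D]} = ∀x. ‖B‖^{[D,x]} ⊸ ‖A‖^{[C,x]}
  ‖B\A‖^{[C,D]} = ∀x. ‖B‖^{[x,C]} ⊸ ‖A‖^{[x,D]}
(bound variables are named canonically by the size of the formula). -/
def transl : HForm → STy → Fm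
  | .atom p, σ => .atom p σ.flat
  | .bar A B, .arr β α => .impl (transl B β) (transl A α)
  | .over A B, .arr (.leaf d) (.leaf c) =>
      .all (A.size + B.size + 1)
        (.impl (transl B (.arr (.leaf (.bvar (A.size + B.size + 1))) (.leaf d)))
               (transl A (.arr (.leaf (.bvar (A.size + B.size + 1))) (.leaf c))))
  | .under B A, .arr (.leaf d) (.leaf c) =>
      .all (B.size + A.size + 1)
        (.impl (transl B (.arr (.leaf c) (.leaf (.bvar (B.size + A.size + 1)))))
               (transl A (.arr (.leaf d) (.leaf (.bvar (B.size + A.size + 1))))))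
  | .bar _ _, .leaf _ => .atom 0 []
  | .over _ _, _ => .atom 0 []
  | .under _ _, _ => .atom 0 []

/-- the string type `σ` has the right shape to serve as (the flattening of)
a principal type for the hybrid formula `H`: Lambek formulas get a pair of
string positions, `A|B` gets an arrow type fitting its components -/
inductive Fits : HForm → STy → Prop
  | atom (p : ℕ) (σ : STy) : Fits (.atom p) σ
  | over {A B : HForm} (c d : FTm) : Lambek A → Lambek B → Fits (.over A B) (pr c d)
  | under {B A : HForm} (c d : FTm) : Lambek B → Lambek A → Fits (.under B A) (pr c d)
  | bar {A B : HForm} {α β : STy} : Fits A α → Fits B β → Fits (.bar A B) (.arr β α)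

/-!
The position `x` quantified in the translation of `A/B` and `B\A` is a bound variable, so by
induction on a Lambek formula only the two outer positions `c, d` of `[c, d]` contribute free
variables. An atom `p` takes the leaves of its type as arguments, and `A|B` splits its type along
the arrow, so the claim follows by induction on `Fits`.
-/

theorem Fm.fv_atom (p : ℕ) (l : List FTm) : (Fm.atom p l).fv = l.toFinset.biUnion FTm.fv := by
  induction l with
  | nil => rfl
  | cons t l ih => rw [List.toFinset_cons, Finset.biUnion_insert, ← ih]; rfl

theorem STy.biUnion_fv_flat (σ : STy) : σ.flat.toFinset.biUnion FTm.fv = σ.vars := by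
  induction σ with
  | leaf t => simp [STy.flat, STy.vars]
  | arr β α ihβ ihα =>
    rw [STy.flat, STy.vars, List.toFinset_append, Finset.union_biUnion, ihα, ihβ,
      Finset.union_comm]

theorem fv_transl_atom (p : ℕ) (σ : STy) : (transl (.atom p) σ).fv = σ.vars := by
  rw [transl, Fm.fv_atom, STy.biUnion_fv_flat]

theorem vars_pr_bvar_left (n : ℕ) (a : FTm) : (pr (.bvar n) a).vars = a.fv := by
  simp [pr, STy.vars, FTm.fv]

theorem vars_pr_bvar_right (n : ℕ) (a : FTm) : (pr a (.bvar n)).vars = a.fv := by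
  simp [pr, STy.vars, FTm.fv]

theorem fv_transl_pr_of_lambek :
    ∀ {A : HForm}, Lambek A → ∀ c d : FTm, (transl A (pr c d)).fv = (pr c d).vars
  | .atom p, _, c, d => fv_transl_atom p (pr c d)
  | .over A B, ⟨hA, hB⟩, c, d => by
    have ihB := fv_transl_pr_of_lambek hB d (.bvar (A.size + B.size + 1))
    have ihA := fv_transl_pr_of_lambek hA c (.bvar (A.size + B.size + 1))
    rw [vars_pr_bvar_right] at ihA ihB
    exact congrArg₂ (· ∪ ·) ihB ihA
  | .under B A, ⟨hB, hA⟩, c, d => by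
    have ihB := fv_transl_pr_of_lambek hB (.bvar (B.size + A.size + 1)) c
    have ihA := fv_transl_pr_of_lambek hA (.bvar (B.size + A.size + 1)) d
    rw [vars_pr_bvar_left] at ihA ihB
    exact (congrArg₂ (· ∪ ·) ihB ihA).trans (Finset.union_comm _ _)

/-- the free meta-variables of the translation of a hybrid
formula `H` with principal type `γ` are exactly the type variables of `γ`. -/
theorem transl_fv_eq_type_vars (H : HForm) (γ : STy) (h : Fits H γ) :
    (transl H γ).fv = γ.vars :=
  match h with
  | .atom p σ => fv_transl_atom p σ
  | .over c d hA hB => fv_transl_pr_of_lambek (A := .over _ _) ⟨hA, hB⟩ c d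
  | .under c d hB hA => fv_transl_pr_of_lambek (A := .under _ _) ⟨hB, hA⟩ c d
  | .bar hA hB =>
    congrArg₂ (· ∪ ·) (transl_fv_eq_type_vars _ _ hB) (transl_fv_eq_type_vars _ _ hA)
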